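/- For every z in the upper half-plane ℍ, with q = e^{2πiz}: the series ∑_{n≥1} σ_{−1}(n)q^n converges absolutely, the infinite product ∏_{n≥1}(1−q^n) converges to a nonzero value, and e^{πiz/12}·∏_{n≥1}(1−q^n) = exp(πiz/12 − ∑_{n≥1} σ_{−1}(n)q^n). In particular the Dedekind eta function η(z) = e^{πiz/12}∏_{n≥1}(1−e^{2πinz}) has no zeros in ℍ. -/

import Mathlib

open Complex MeasureTheory
open scoped Real

noncomputable section

/-- `SL(2,ℤ)`. -/
abbrev SL2Z := Matrix.SpecialLinearGroup (Fin 2) ℤ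

/-- The upper half-plane, as a subset of `ℂ`. -/
def HSet : Set ℂ := {z : ℂ | 0 < z.im}

/-- The automorphy factor `cz + d`. -/
def jC (γ : SL2Z) (z : ℂ) : ℂ := ((γ 1 0 : ℤ) : ℂ) * z + ((γ 1 1 : ℤ) : ℂ)

/-- The Möbius action of `SL(2,ℤ)` on `ℂ` (meaningful on the upper half-plane). -/
def mact (γ : SL2Z) (z : ℂ) : ℂ := (((γ 0 0 : ℤ) : ℂ) * z + ((γ 0 1 : ℤ) : ℂ)) / jC γ z

/-- `∂_x F`. -/
def pdX (F : ℂ → ℂ) (z : ℂ) : ℂ := fderiv ℝ F z 1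

/-- `∂_y F`. -/
def pdY (F : ℂ → ℂ) (z : ℂ) : ℂ := fderiv ℝ F z Complex.I

/-- `∂_z̄ F = ½(∂_x F + i ∂_y F)`. -/
def dzbar (F : ℂ → ℂ) (z : ℂ) : ℂ := (pdX F z + Complex.I * pdY F z) / 2

/-- `∂_z F = ½(∂_x F − i ∂_y F)`. -/
def dzz (F : ℂ → ℂ) (z : ℂ) : ℂ := (pdX F z - Complex.I * pdY F z) / 2

/-- `ξ_p F = 2 i y^p ∂_z̄ F`. -/
def xiOp (p : ℂ) (F : ℂ → ℂ) (z : ℂ) : ℂ :=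
  2 * Complex.I * ((z.im : ℂ) ^ p) * dzbar F z

/-- `Δ_p F = −4 y² ∂_z ∂_z̄ F + 2 i p y ∂_z̄ F`. -/
def DeltaOp (p : ℂ) (F : ℂ → ℂ) (z : ℂ) : ℂ :=
  -4 * (z.im : ℂ) ^ 2 * dzz (fun w => dzbar F w) z + 2 * Complex.I * p * (z.im : ℂ) * dzbar F z

/-- `(conj w)^s`, computed as `conj (w ^ conj s)`; this realizes the convention
`arg (c z̄ + d) ∈ [−π, π)` for powers of `c z̄ + d`. -/
def cpowBar (w s : ℂ) : ℂ := (starRingEnd ℂ) (w ^ ((starRingEnd ℂ) s))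

/-- The holomorphic slash action `(F|_{v,p}γ)(z) = v(γ)⁻¹ (cz+d)^{−p} F(γz)`. -/
def hslash (v : SL2Z → ℂ) (p : ℂ) (γ : SL2Z) (F : ℂ → ℂ) (z : ℂ) : ℂ :=
  (v γ)⁻¹ * (jC γ z) ^ (-p) * F (mact γ z)

/-- The antiholomorphic slash action `(F|ᵃ_{v,p}γ)(z) = v(γ)⁻¹ (cz̄+d)^{−p} F(γz)`. -/
def aslash (v : SL2Z → ℂ) (p : ℂ) (γ : SL2Z) (F : ℂ → ℂ) (z : ℂ) : ℂ :=
  (v γ)⁻¹ * cpowBar (jC γ z) (-p) * F (mact γ z)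

/-- `v` is a multiplier system suitable for weight `p`. -/
def IsMultiplierSystem (v : SL2Z → ℂ) (p : ℂ) : Prop :=
  (∀ γ, v γ ≠ 0) ∧
  (∀ F : ℂ → ℂ, ∀ γ δ : SL2Z, ∀ z ∈ HSet,
    hslash v p (γ * δ) F z = hslash v p δ (hslash v p γ F) z) ∧
  (∀ F : ℂ → ℂ, ∀ z ∈ HSet, hslash v p (-1) F z = F z)

/-- `F` has at most exponential growth at the cusp (on the domain `D`). -/
def ExpGrowthOn (F : ℂ → ℂ) (D : Set ℂ) : Prop :=
  ∃ a : ℝ, 0 < a ∧ ∀ K : Set ℝ, IsCompact K → ∃ C : ℝ, 0 < C ∧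
    ∀ z ∈ D, z.re ∈ K → 1 ≤ z.im → ‖F z‖ ≤ C * Real.exp (a * z.im)

/-- The growth condition `F(z) = O(((z−ζ)/(z−ζ̄))^{−a})` as `z → ζ`. -/
def GrowthCondAt (F : ℂ → ℂ) (D : Set ℂ) (ζ : ℂ) : Prop :=
  ∃ a C δ : ℝ, 0 < a ∧ 0 < C ∧ 0 < δ ∧
    ∀ z ∈ D, z ≠ ζ → ‖z - ζ‖ < δ →
      ‖F z‖ ≤ C * (‖(z - ζ) / (z - (starRingEnd ℂ) ζ)‖) ^ (-a)

/-- `S` is a union of finitely many (possibly zero) `SL(2,ℤ)`-orbits in the upper half-plane. -/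
def IsOrbitUnion (S : Set ℂ) : Prop :=
  ∃ T : Finset ℂ, (T : Set ℂ) ⊆ HSet ∧
    S = {z : ℂ | ∃ ζ ∈ T, ∃ γ : SL2Z, z = mact γ ζ}

/-- Membership in `H^S_p(v)`: smooth, `p`-harmonic, `|_{v,p}`-invariant, of at most
exponential growth at the cusp, and satisfying the growth condition at each point of `S`. -/
def MemHS (p : ℂ) (v : SL2Z → ℂ) (S : Set ℂ) (F : ℂ → ℂ) : Prop :=
  ContDiffOn ℝ (⊤ : ℕ∞) F (HSet \ S) ∧
  (∀ z ∈ HSet \ S, DeltaOp p F z = 0) ∧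
  (∀ γ : SL2Z, ∀ z ∈ HSet \ S, hslash v p γ F z = F z) ∧
  ExpGrowthOn F (HSet \ S) ∧
  (∀ ζ ∈ S, GrowthCondAt F (HSet \ S) ζ)

/-- Membership in `M̄^S_p(v)`: antiholomorphic, `|ᵃ_{v,p}`-invariant, of at most
exponential growth at the cusp, and satisfying the growth condition at each point of `S`. -/
def MemMBarS (p : ℂ) (v : SL2Z → ℂ) (S : Set ℂ) (F : ℂ → ℂ) : Prop :=
  DifferentiableOn ℂ (fun z => (starRingEnd ℂ) (F z)) (HSet \ S) ∧
  (∀ γ : SL2Z, ∀ z ∈ HSet \ S, aslash v p γ F z = F z) ∧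
  ExpGrowthOn F (HSet \ S) ∧
  (∀ ζ ∈ S, GrowthCondAt F (HSet \ S) ζ)

/-- `σ_u(n) = ∑_{d ∣ n} d^u`, as a complex number. -/
def sigmaC (u : ℤ) (n : ℕ) : ℂ := ∑ d ∈ n.divisors, (d : ℂ) ^ u

/-- The branch `log η(z) = πiz/12 − ∑_{n≥1} σ_{−1}(n) e^{2πinz}` of the logarithm of
the Dedekind eta function.  (The term `n = 0` of the sum vanishes.) -/
def logEta (z : ℂ) : ℂ :=
  (π : ℂ) * Complex.I * z / 12 -
    ∑' n : ℕ, sigmaC (-1) n * Complex.exp (2 * (π : ℂ) * Complex.I * (n : ℂ) * z)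

/-- `η^{2r}(z) = exp(2 r log η(z))`. -/
def etaPow (r : ℂ) (z : ℂ) : ℂ := Complex.exp (2 * r * logEta z)

/-- `η̄^{−2r}(z) = exp(−2 r conj(log η(z)))`. -/
def etaBarPow (r : ℂ) (z : ℂ) : ℂ := Complex.exp (-2 * r * (starRingEnd ℂ) (logEta z))

/-- The eta multiplier system `v_r`, defined by evaluating the transformation
behavior of `η^{2r}` at `z = i`. -/
def vr (r : ℂ) (γ : SL2Z) : ℂ :=
  etaPow r (mact γ Complex.I) / ((jC γ Complex.I) ^ r * etaPow r Complex.I)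

/-- `q^α = e^{2πiαz}`. -/
def qp (α z : ℂ) : ℂ := Complex.exp (2 * (π : ℂ) * Complex.I * α * z)

/-- The incomplete Gamma function `Γ(s,w) = ∫_0^∞ (w+u)^{s−1} e^{−w−u} du`
(for `w ∉ (−∞,0]`). -/
def GammaInc (s w : ℂ) : ℂ :=
  ∫ u in Set.Ioi (0 : ℝ), (w + (u : ℂ)) ^ (s - 1) * Complex.exp (-w - (u : ℂ))

/-- `M_p(n;y) = ∫_y^1 t^{−p} e^{nt} dt`. -/
def MFun (p n : ℂ) (y : ℝ) : ℂ := ∫ t in y..(1 : ℝ), ((t : ℂ)) ^ (-p) * Complex.exp (n * (t : ℂ))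

/-- `U_M = ℂ ∖ [12M, ∞)`. -/
def UM (M : ℤ) : Set ℂ := {r : ℂ | ¬ (r.im = 0 ∧ ((12 * M : ℤ) : ℝ) ≤ r.re)}

end

noncomputable section

/-- The raising operator `E^+_p = 2iy∂_x + 2y∂_y + p`. -/
def Eplus (p : ℂ) (f : ℂ → ℂ) (z : ℂ) : ℂ :=
  2 * Complex.I * (z.im : ℂ) * pdX f z + 2 * (z.im : ℂ) * pdY f z + p * f z

/-- The lowering operator `E^−_p = −2iy∂_x + 2y∂_y − p`. -/
def Eminus (p : ℂ) (f : ℂ → ℂ) (z : ℂ) : ℂ :=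
  -2 * Complex.I * (z.im : ℂ) * pdX f z + 2 * (z.im : ℂ) * pdY f z - p * f z

/-- The Casimir operator in weight `p`: `ω_p = −y²∂_y² − y²∂_x² + ipy∂_x`. -/
def omegaOp (p : ℂ) (f : ℂ → ℂ) (z : ℂ) : ℂ :=
  -(z.im : ℂ) ^ 2 * pdY (fun w => pdY f w) z - (z.im : ℂ) ^ 2 * pdX (fun w => pdX f w) z +
    Complex.I * p * (z.im : ℂ) * pdX f z

/-- The real-analytic slash action `(f|^{ra}_{v,p}γ)(z) = v(γ)⁻¹ e^{−ip·arg(cz+d)} f(γz)`. -/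
def raslash (v : SL2Z → ℂ) (p : ℂ) (γ : SL2Z) (f : ℂ → ℂ) (z : ℂ) : ℂ :=
  (v γ)⁻¹ * Complex.exp (-Complex.I * p * ((jC γ z).arg : ℂ)) * f (mact γ z)

/-- The Fourier-expansion hypothesis on `η̄^{−2r}F`: for `Im z` sufficiently large,
`(η̄^{−2r}F)(z) = ∑_{ν ≥ μ} a_ν(r) e^{−2πi(ν−r/12)z̄}`, with each `a_ν` entire and
`a_μ` not identically zero. -/
def FourierHyp (F : ℂ → ℂ) (S : Set ℂ) (μ : ℤ) (a : ℤ → ℂ → ℂ) : Prop :=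
  (∀ ν : ℤ, Differentiable ℂ (a ν)) ∧
  (∃ r : ℂ, a μ r ≠ 0) ∧
  ∃ Y : ℝ, ∀ r : ℂ, ∀ z ∈ HSet \ S, Y < z.im →
    HasSum (fun k : ℕ =>
        a (μ + k) r *
          Complex.exp (-2 * (π : ℂ) * Complex.I * (((μ : ℂ) + (k : ℂ)) - r / 12) *
            (starRingEnd ℂ) z))
      (etaBarPow r z * F z)

/-- Term of the first (incomplete-Gamma) sum in the normalized Fourier expansion. -/
def term1 (ℓ : ℤ) (a : ℤ → ℂ → ℂ) (r z : ℂ) (ν : ℤ) : ℂ :=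
  a (-ν) r * (-4 * (π : ℂ) * ((ν : ℂ) + r / 12)) ^ ((ℓ : ℂ) + r - 1) *
    qp ((ν : ℂ) + r / 12) z *
    GammaInc (1 - (ℓ : ℂ) - r) (-4 * (π : ℂ) * ((ν : ℂ) + r / 12) * (z.im : ℂ))

/-- Term of the middle (`M_{ℓ+r}`) sum in the normalized Fourier expansion. -/
def term2 (ℓ : ℤ) (a : ℤ → ℂ → ℂ) (r z : ℂ) (ν : ℤ) : ℂ :=
  a (-ν) r * qp ((ν : ℂ) + r / 12) z * MFun ((ℓ : ℂ) + r) (4 * (π : ℂ) * ((ν : ℂ) + r / 12)) z.im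

/-- Term of the last (`b_ν`) sum in the normalized Fourier expansion. -/
def term3 (b : ℤ → ℂ → ℂ) (r z : ℂ) (ν : ℤ) : ℂ := b ν r * qp ((ν : ℂ) + r / 12) z

/-- The normalized Fourier expansion of the harmonic lift at `(r, z)`:
`val = ∑_{ν ≤ −max(M,μ)} term1 ν + ∑_{ν=1−M}^{−μ} term2 ν + ∑_{ν ≥ 1−mℓ} term3 ν`,
the infinite sums converging absolutely. -/
def ExpandsAt (ℓ M μ mℓ : ℤ) (a b : ℤ → ℂ → ℂ) (r z : ℂ) (val : ℂ) : Prop :=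
  ∃ s₁ s₃ : ℂ,
    HasSum (fun k : ℕ => term1 ℓ a r z (-(max M μ) - (k : ℤ))) s₁ ∧
    HasSum (fun k : ℕ => term3 b r z (1 - mℓ + (k : ℤ))) s₃ ∧
    val = s₁ + (∑ ν ∈ Finset.Icc (1 - M) (-μ), term2 ℓ a r z ν) + s₃

/-- The normalized harmonic lift property (i)–(iii): `h(·,z)` holomorphic on `U`,
`h(r,·) ∈ H^S_{ℓ+r}(v_r)` with `ξ_{ℓ+r} h(r,·) = η̄^{−2r}F`, and the normalized
Fourier expansion with parameter `M` for `Im z` sufficiently large. -/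
def NormalizedLiftOn (ℓ : ℤ) (S : Set ℂ) (F : ℂ → ℂ) (μ : ℤ) (a : ℤ → ℂ → ℂ)
    (mℓ M : ℤ) (U : Set ℂ) (h : ℂ → ℂ → ℂ) : Prop :=
  (∀ z ∈ HSet \ S, DifferentiableOn ℂ (fun r => h r z) U) ∧
  (∀ r ∈ U, MemHS ((ℓ : ℂ) + r) (vr r) S (h r)) ∧
  (∀ r ∈ U, ∀ z ∈ HSet \ S, xiOp ((ℓ : ℂ) + r) (h r) z = etaBarPow r z * F z) ∧
  (∃ b : ℤ → ℂ → ℂ, (∀ ν : ℤ, 1 - mℓ ≤ ν → DifferentiableOn ℂ (b ν) U) ∧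
    ∃ Y : ℝ, ∀ r ∈ U, ∀ z ∈ HSet \ S, Y < z.im → ExpandsAt ℓ M μ mℓ a b r z (h r z))

end

section EtaAuxProof

open Complex

private lemma eta_abs_w_lt {z : ℂ} (hz : 0 < z.im) :
    ‖Complex.exp (2 * (π : ℂ) * I * z)‖ < 1 := by
  rw [Complex.norm_exp, Real.exp_lt_one_iff]
  have h : (2 * (π : ℂ) * I * z).re = -(2 * π * z.im) := by
    simp [Complex.mul_re, Complex.mul_im]
  rw [h]
  nlinarith [Real.pi_pos]

private lemma eta_key {w : ℂ} (hw : ‖w‖ < 1) :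
    ∃ A : ℂ,
      HasSum (fun n : ℕ => sigmaC (-1) n * w ^ n) (-A) ∧
      HasSum (fun a : ℕ => if a = 0 then 0 else Complex.log (1 - w ^ a)) A := by
  set ρ : ℝ := ‖w‖ with hρ
  have hρ0 : 0 ≤ ρ := norm_nonneg w
  set f : ℕ × ℕ → ℂ := fun p => if p.1 = 0 then 0 else -((w ^ p.1) ^ p.2 / p.2) with hf
  have hwa : ∀ a : ℕ, a ≠ 0 → ‖w ^ a‖ < 1 := by
    intro a ha
    rw [norm_pow]
    calc ρ ^ a ≤ ρ ^ 1 := pow_le_pow_of_le_one hρ0 hw.le (Nat.one_le_iff_ne_zero.mpr ha)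
    _ = ρ := pow_one ρ
    _ < 1 := hw
  have hmaj : Summable (fun p : ℕ × ℕ => ρ⁻¹ * (ρ ^ p.1 * ρ ^ p.2)) :=
    ((summable_geometric_of_lt_one hρ0 hw).mul_of_nonneg
      (summable_geometric_of_lt_one hρ0 hw) (fun _ => pow_nonneg hρ0 _)
      (fun _ => pow_nonneg hρ0 _)).mul_left _
  have hbound : ∀ p : ℕ × ℕ, ‖f p‖ ≤ ρ⁻¹ * (ρ ^ p.1 * ρ ^ p.2) := by
    rintro ⟨a, m⟩
    rcases eq_or_ne a 0 with rfl | ha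
    · simp only [hf, if_pos rfl, norm_zero]
      positivity
    rcases eq_or_ne m 0 with rfl | hm
    · simp only [hf, if_neg ha, Nat.cast_zero, div_zero, neg_zero, norm_zero]
      positivity
    have h1a : 1 ≤ a := Nat.one_le_iff_ne_zero.mpr ha
    have h1m : 1 ≤ m := Nat.one_le_iff_ne_zero.mpr hm
    have hnorm : ‖f (a, m)‖ = ρ ^ (a * m) / m := by
      simp only [hf, if_neg ha, norm_neg, norm_div, norm_pow,
        Complex.norm_natCast, ← pow_mul, ← hρ]
    have hle : a - 1 + m ≤ a * m := by
      obtain ⟨a', rfl⟩ := Nat.exists_eq_add_of_le h1a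
      have : a' ≤ a' * m := Nat.le_mul_of_pos_right a' (by omega)
      rw [add_mul, one_mul]; omega
    rcases eq_or_ne ρ 0 with h0 | h0
    · rw [hnorm, h0, zero_pow (by positivity)]
      rw [zero_div]
      positivity
    · have hρpos : 0 < ρ := lt_of_le_of_ne hρ0 (Ne.symm h0)
      rw [hnorm]
      calc ρ ^ (a * m) / m ≤ ρ ^ (a * m) :=
            div_le_self (by positivity) (by exact_mod_cast h1m)
      _ ≤ ρ ^ (a - 1 + m) := pow_le_pow_of_le_one hρ0 hw.le hle
      _ = ρ ^ (a - 1) * ρ ^ m := pow_add ρ _ _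
      _ = ρ⁻¹ * (ρ ^ a * ρ ^ m) := by
          rw [show ρ ^ a = ρ * ρ ^ (a - 1) by rw [← pow_succ']; congr 1; omega]
          field_simp
  have hfs : Summable f := Summable.of_norm_bounded hmaj hbound
  refine ⟨∑' p, f p, ?_, ?_⟩
  · have key := hfs.hasSum.tsum_fiberwise (fun p => p.1 * p.2)
    have hfib : ∀ N : ℕ,
        (∑' (x : (fun p : ℕ × ℕ => p.1 * p.2) ⁻¹' {N}), f x) = -(sigmaC (-1) N * w ^ N) := by
      intro N
      rcases eq_or_ne N 0 with rfl | hN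
      · have hz : ∀ x : (fun p : ℕ × ℕ => p.1 * p.2) ⁻¹' {0}, f x = 0 := by
          rintro ⟨⟨a, m⟩, hp⟩
          simp only [Set.mem_preimage, Set.mem_singleton_iff, Nat.mul_eq_zero] at hp
          rcases hp with rfl | rfl
          · simp [hf]
          · simp [hf]
        rw [tsum_congr hz, tsum_zero]
        simp [sigmaC, Nat.divisors_zero]
      · have hset : (fun p : ℕ × ℕ => p.1 * p.2) ⁻¹' {N} = ↑N.divisorsAntidiagonal := by
          ext p; simp [Nat.mem_divisorsAntidiagonal, hN]
        rw [hset, Finset.tsum_subtype' N.divisorsAntidiagonal f]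
        have heq : ∀ p ∈ N.divisorsAntidiagonal, f p = -(w ^ N * ((p.2 : ℂ))⁻¹) := by
          rintro ⟨a, m⟩ hp
          obtain ⟨h1, h2⟩ := Nat.mem_divisorsAntidiagonal.mp hp
          have ha : a ≠ 0 := by rintro rfl; simp at h1; omega
          simp only [hf, if_neg ha, ← pow_mul, h1]
          ring
        rw [Finset.sum_congr rfl heq, Finset.sum_neg_distrib, ← Finset.mul_sum,
          Nat.sum_divisorsAntidiagonal' (f := fun _ b => ((b : ℂ))⁻¹)]
        simp only [sigmaC, zpow_neg_one]
        ring
    rw [show (fun N : ℕ => sigmaC (-1) N * w ^ N)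
        = fun N => -(∑' (x : (fun p : ℕ × ℕ => p.1 * p.2) ⁻¹' {N}), f x) by
      funext N; rw [hfib N, neg_neg]]
    exact key.neg
  · apply HasSum.prod_fiberwise hfs.hasSum
    intro a
    rcases eq_or_ne a 0 with rfl | ha
    · simpa [hf] using hasSum_zero
    · have hlog := (hasSum_taylorSeries_neg_log (z := w ^ a)
        (by simpa using hwa a ha)).neg
      rw [neg_neg] at hlog
      simp only [if_neg ha]
      convert hlog using 2 with m
      · rfl
      · simp [hf, if_neg ha]

end EtaAuxProof

/-- For `z ∈ ℍ` the series `∑_{n≥1} σ_{−1}(n)qⁿ` converges absolutely,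
the product `∏_{n≥1}(1−qⁿ)` converges to a nonzero value, and
`e^{πiz/12}·∏_{n≥1}(1−qⁿ) = exp(πiz/12 − ∑_{n≥1}σ_{−1}(n)qⁿ)`; in particular the
Dedekind eta function has no zeros in `ℍ`. -/
theorem eta_product_log (z : ℂ) (hz : z ∈ HSet) :
    Summable (fun n : ℕ =>
      ‖sigmaC (-1) n * Complex.exp (2 * (π : ℂ) * Complex.I * (n : ℂ) * z)‖) ∧
    (∃ P : ℂ, P ≠ 0 ∧
      HasProd (fun n : ℕ => 1 - Complex.exp (2 * (π : ℂ) * Complex.I * ((n : ℂ) + 1) * z)) P) ∧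
    Complex.exp ((π : ℂ) * Complex.I * z / 12) *
        (∏' n : ℕ, (1 - Complex.exp (2 * (π : ℂ) * Complex.I * ((n : ℂ) + 1) * z)))
      = Complex.exp (logEta z) ∧
    Complex.exp ((π : ℂ) * Complex.I * z / 12) *
        (∏' n : ℕ, (1 - Complex.exp (2 * (π : ℂ) * Complex.I * ((n : ℂ) + 1) * z))) ≠ 0 := by
  have hz' : 0 < z.im := hz
  set w := Complex.exp (2 * (π : ℂ) * Complex.I * z) with hwdef
  have hw : ‖w‖ < 1 := eta_abs_w_lt hz'
  have hq : ∀ n : ℕ, Complex.exp (2 * (π : ℂ) * Complex.I * (n : ℂ) * z) = w ^ n := by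
    intro n
    rw [hwdef, ← Complex.exp_nat_mul]
    ring_nf
  obtain ⟨A, hA1, hA2⟩ := eta_key hw
  have hσ : HasSum (fun n : ℕ =>
      sigmaC (-1) n * Complex.exp (2 * (π : ℂ) * Complex.I * (n : ℂ) * z)) (-A) := by
    simpa only [hq] using hA1
  have hwa : ∀ n : ℕ, ‖w ^ (n + 1)‖ < 1 := by
    intro n
    rw [norm_pow]
    calc ‖w‖ ^ (n + 1) ≤ ‖w‖ ^ 1 :=
          pow_le_pow_of_le_one (norm_nonneg w) hw.le (by omega)
    _ = ‖w‖ := pow_one _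
    _ < 1 := hw
  have hne : ∀ n : ℕ, 1 - w ^ (n + 1) ≠ 0 := by
    intro n h
    have h1 : w ^ (n + 1) = 1 := by
      have := sub_eq_zero.mp h
      exact this.symm
    have h2 := hwa n
    rw [h1] at h2
    simp at h2
  have hL : HasSum (fun n : ℕ => Complex.log (1 - w ^ (n + 1))) A := by
    have h := (hasSum_nat_add_iff'
      (f := fun a : ℕ => if a = 0 then 0 else Complex.log (1 - w ^ a)) 1).mpr hA2
    have h2 : A - ∑ i ∈ Finset.range 1,
        (if i = 0 then (0 : ℂ) else Complex.log (1 - w ^ i)) = A := by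
      simp
    rw [h2] at h
    refine h.congr_fun fun n => ?_
    simp
  have hP : HasProd (fun n : ℕ => 1 - w ^ (n + 1)) (Complex.exp A) := by
    have h := hL.cexp
    refine h.congr_fun fun n => ?_
    simp only [Function.comp]
    exact (Complex.exp_log (hne n)).symm
  have hfun : (fun n : ℕ => 1 - Complex.exp (2 * (π : ℂ) * Complex.I * ((n : ℂ) + 1) * z))
      = fun n : ℕ => 1 - w ^ (n + 1) := by
    funext n
    have := hq (n + 1)
    push_cast at this
    rw [this]
  refine ⟨?_, ⟨Complex.exp A, Complex.exp_ne_zero A, by rw [hfun]; exact hP⟩, ?_, ?_⟩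
  · -- absolute convergence
    have hcard : ∀ n : ℕ, (n.divisors).card ≤ n := by
      intro n
      rw [Nat.divisors]
      exact (Finset.card_filter_le _ _).trans (by simp)
    have habs : ∀ n : ℕ,
        ‖sigmaC (-1) n * Complex.exp (2 * (π : ℂ) * Complex.I * (n : ℂ) * z)‖
          ≤ (n : ℝ) * ‖w‖ ^ n := by
      intro n
      rw [hq n, norm_mul, norm_pow]
      refine mul_le_mul_of_nonneg_right ?_ (pow_nonneg (norm_nonneg w) n)
      calc ‖sigmaC (-1) n‖ ≤ ∑ d ∈ n.divisors, ‖(d : ℂ) ^ (-1 : ℤ)‖ :=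
            norm_sum_le _ _
      _ ≤ ∑ d ∈ n.divisors, 1 := by
            refine Finset.sum_le_sum fun d hd => ?_
            have hd1 : 1 ≤ d := Nat.pos_of_mem_divisors hd
            rw [zpow_neg_one, norm_inv, Complex.norm_natCast]
            exact inv_le_one_of_one_le₀ (by exact_mod_cast hd1)
      _ = (n.divisors).card := by simp
      _ ≤ (n : ℝ) := by exact_mod_cast hcard n
    refine Summable.of_nonneg_of_le (fun n => norm_nonneg _) habs ?_
    have := summable_pow_mul_geometric_of_norm_lt_one (R := ℝ) 1
      (r := ‖w‖) (by rwa [Real.norm_eq_abs, _root_.abs_of_nonneg (norm_nonneg w)])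
    simpa using this
  · -- the product formula
    have htp : (∏' n : ℕ, (1 - Complex.exp (2 * (π : ℂ) * Complex.I * ((n : ℂ) + 1) * z)))
        = Complex.exp A := by
      rw [hfun]
      exact hP.tprod_eq
    rw [htp, ← Complex.exp_add]
    simp only [logEta, hσ.tsum_eq]
    congr 1
    ring
  · -- nonvanishing
    have htp : (∏' n : ℕ, (1 - Complex.exp (2 * (π : ℂ) * Complex.I * ((n : ℂ) + 1) * z)))
        = Complex.exp A := by
      rw [hfun]
      exact hP.tprod_eq
    rw [htp]
    exact mul_ne_zero (Complex.exp_ne_zero _) (Complex.exp_ne_zero _)
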